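/- Let G be a connected simple graph on a finite vertex type V and let U be a finset of vertices of even cardinality. Then there exists a finset W of edges of G with ∂W = U. -/

import Mathlib

/-!
Taking boundaries turns symmetric difference of edge sets into symmetric difference of vertex
sets, and the edge set of a path from `a` to `b ≠ a` has boundary `{a, b}`. Splitting `U` into
pairs and joining each pair by a path in `G`, the symmetric difference of these edge sets has
boundary `U`.
-/

open Finset
open scoped symmDiff

def graphBoundary {V : Type*} [Fintype V] [DecidableEq V]
    (W : Finset (Sym2 V)) : Finset V :=
  Finset.univ.filter fun v => Odd ((W.filter fun e => v ∈ e).card)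

namespace Finset

variable {α : Type*} [DecidableEq α]

theorem card_symmDiff_add_two_mul_card_inter (s t : Finset α) :
    #(s ∆ t) + 2 * #(s ∩ t) = #s + #t := by
  have h := card_union_of_disjoint (disjoint_symmDiff_inf s t)
  rw [← sup_eq_union, symmDiff_sup_inf, inf_eq_inter, sup_eq_union] at h
  rw [← card_union_add_card_inter, h, two_mul, add_assoc]

theorem even_card_symmDiff_iff (s t : Finset α) :
    Even #(s ∆ t) ↔ (Even #s ↔ Even #t) := by
  rw [← Nat.even_add, ← card_symmDiff_add_two_mul_card_inter, Nat.even_add]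
  simp

theorem filter_symmDiff (p : α → Prop) [DecidablePred p] (s t : Finset α) :
    (s ∆ t).filter p = s.filter p ∆ t.filter p := by
  ext
  simp only [mem_filter, mem_symmDiff]
  tauto

@[elab_as_elim]
theorem induction_on_even_card {p : Finset α → Prop} (empty : p ∅)
    (insert_insert : ∀ a b s, a ≠ b → a ∉ s → b ∉ s → p s → p (insert a (insert b s)))
    (s : Finset α) (hs : Even #s) : p s := by
  obtain ⟨n, hn⟩ := hs
  induction n generalizing s with
  | zero => rwa [card_eq_zero.mp hn]
  | succ n ih =>
    obtain ⟨a, t, hat, rfl, ht⟩ := card_eq_succ.mp (show #s = (n + n + 1) + 1 by omega)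
    obtain ⟨b, r, hbr, rfl, hr⟩ := card_eq_succ.mp ht
    rw [mem_insert, not_or] at hat
    exact insert_insert a b r hat.1 hat.2 hbr (ih r hr)

end Finset

section Boundary

variable {V : Type*} [Fintype V] [DecidableEq V]

@[simp]
theorem graphBoundary_empty : graphBoundary (∅ : Finset (Sym2 V)) = ∅ := by
  simp [graphBoundary]

theorem graphBoundary_symmDiff (A B : Finset (Sym2 V)) :
    graphBoundary (A ∆ B) = graphBoundary A ∆ graphBoundary B := by
  ext v
  simp only [graphBoundary, mem_symmDiff, mem_filter, mem_univ, true_and, filter_symmDiff,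
    ← Nat.not_even_iff_odd, even_card_symmDiff_iff]
  tauto

theorem SimpleGraph.Walk.IsTrail.graphBoundary_edges {G : SimpleGraph V} {u v : V}
    {p : G.Walk u v} (hp : p.IsTrail) (huv : u ≠ v) :
    graphBoundary p.edges.toFinset = {u, v} := by
  ext x
  have hcard : #(p.edges.toFinset.filter fun e => x ∈ e) = p.edges.countP fun e => x ∈ e := by
    rw [List.countP_eq_length_filter, ← List.toFinset_card_of_nodup (hp.edges_nodup.filter _),
      List.toFinset_filter]
    simp
  simp only [graphBoundary, mem_filter, mem_univ, true_and, hcard, ← Nat.not_even_iff_odd,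
    hp.even_countP_edges_iff, mem_insert, mem_singleton]
  tauto

end Boundary

/-- In a connected simple graph `G`, every finset `U` of
vertices of even cardinality is the boundary of some finset `W` of edges of
`G`. -/
theorem stmt_10 {V : Type*} [Fintype V] [DecidableEq V] (G : SimpleGraph V)
    (hconn : G.Connected) (U : Finset V) (hU : Even U.card) :
    ∃ W : Finset (Sym2 V), (∀ e ∈ W, e ∈ G.edgeSet) ∧ graphBoundary W = U := by
  refine Finset.induction_on_even_card ?_ ?_ U hU
  · exact ⟨∅, by simp, graphBoundary_empty⟩
  rintro a b s hab ha hb ⟨W, hWG, hW⟩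
  obtain ⟨p⟩ := hconn.preconnected a b
  let q : G.Walk a b := p.toPath
  have hq : q.IsTrail := p.toPath.2.isTrail
  refine ⟨q.edges.toFinset ∆ W, fun e he => ?_, ?_⟩
  · rcases mem_union.mp (symmDiff_subset_union he) with he | he
    · exact q.edges_subset_edgeSet (List.mem_toFinset.mp he)
    · exact hWG e he
  · rw [graphBoundary_symmDiff, hW, hq.graphBoundary_edges hab]
    ext x
    simp only [mem_symmDiff, mem_insert, mem_singleton]
    grind
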